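/- arXiv:2411.19011 — 6 statements merged into one kernel-verified Lean document; each statement's English description precedes it below -/
import Mathlib

section
/- Let k be a field of characteristic ≠ 2, let u = 1 + a_1 x + a_2 x^2 + ⋯ ∈ k⟦x⟧ satisfy u^2 = 1 + x, and for N ≥ 2 set b_{1,N} = x + a_1 x^2 + ⋯ + a_{N−1} x^N + y and b_{2,N} = x + a_1 x^2 + ⋯ + a_{N−1} x^N − y in k[x,y]. Then δ_N := b_{1,N} b_{2,N} − (x^2 + x^3 − y^2) lies in the ideal (x, y)^{N+1} of k[x,y]. -/
open MvPolynomial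

/-!
Write `x = X 0` and `T` for the truncation of `u` in degree `< N`. The sum in the statement is
`x·T(x)`, so the element is `x²·(T(x)² − 1 − x)`. Since `u² = 1 + x`, the polynomial `T² − 1 − X`
agrees with the power series `u² − 1 − X = 0` up to degree `N`, hence is divisible by `X^N`, and
the element is a multiple of `x^(N+2)`.
-/

namespace Polynomial

variable {R : Type*} [CommRing R]

theorem X_pow_dvd_sub_of_trunc_coe_eq {n : ℕ} {p q : R[X]}
    (h : PowerSeries.trunc n (p : PowerSeries R) = PowerSeries.trunc n (q : PowerSeries R)) :
    X ^ n ∣ p - q := by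
  rw [X_pow_dvd_iff]
  intro d hd
  simpa [PowerSeries.coeff_trunc, hd, sub_eq_zero] using congrArg (coeff · d) h

theorem X_pow_dvd_trunc_pow_sub {f : PowerSeries R} {p : R[X]} {a : ℕ} (h : f ^ a = p) (n : ℕ) :
    X ^ n ∣ PowerSeries.trunc n f ^ a - p :=
  X_pow_dvd_sub_of_trunc_coe_eq (by rw [coe_pow, PowerSeries.trunc_trunc_pow, h])

theorem aeval_mem_pow_of_X_pow_dvd {S : Type*} [CommRing S] [Algebra R S] {I : Ideal S} {x : S}
    (hx : x ∈ I) {n : ℕ} {p : R[X]} (hp : X ^ n ∣ p) : aeval x p ∈ I ^ n := by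
  obtain ⟨q, rfl⟩ := hp
  rw [map_mul, map_pow, aeval_X]
  exact Ideal.mul_mem_right _ _ (Ideal.pow_mem_pow hx n)

end Polynomial

theorem MvPolynomial.sum_range_C_coeff_mul_X_pow_succ {k σ : Type*} [CommRing k]
    (f : PowerSeries k) (j : σ) (n : ℕ) :
    ∑ i ∈ Finset.range n, C (PowerSeries.coeff i f) * X j ^ (i + 1) =
      X j * Polynomial.aeval (X j : MvPolynomial σ k) (PowerSeries.trunc n f) := by
  rw [Polynomial.aeval_def, PowerSeries.eval₂_trunc_eq_sum_range, Finset.mul_sum]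
  refine Finset.sum_congr rfl fun i _ => ?_
  rw [algebraMap_eq, pow_succ]
  ring

theorem perturbation_in_power_of_max_ideal_general (k : Type*) [Field k]
    (u : PowerSeries k)
    (hu : u ^ 2 = 1 + PowerSeries.X) (N : ℕ) :
    ((∑ i ∈ Finset.range N, C (PowerSeries.coeff i u) * (X 0) ^ (i + 1)) + X 1) *
      ((∑ i ∈ Finset.range N, C (PowerSeries.coeff i u) * (X 0) ^ (i + 1)) - X 1) -
      ((X 0) ^ 2 + (X 0) ^ 3 - (X 1) ^ 2)
      ∈ (Ideal.span {X 0, X 1} : Ideal (MvPolynomial (Fin 2) k)) ^ (N + 1) := by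
  have hu' : u ^ 2 = ((1 + Polynomial.X : Polynomial k) : PowerSeries k) := by
    rw [hu, Polynomial.coe_add, Polynomial.coe_one, Polynomial.coe_X]
  have hdvd : Polynomial.X ^ (N + 2) ∣
      Polynomial.X ^ 2 * (PowerSeries.trunc N u ^ 2 - (1 + Polynomial.X)) := by
    rw [pow_add, mul_comm (Polynomial.X ^ N)]
    exact mul_dvd_mul_left _ (Polynomial.X_pow_dvd_trunc_pow_sub hu' N)
  have hX0 : (X 0 : MvPolynomial (Fin 2) k) ∈ Ideal.span {X 0, X 1} := Ideal.subset_span (by simp)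
  have hmem := Ideal.pow_le_pow_right (N + 1).le_succ
    (Polynomial.aeval_mem_pow_of_X_pow_dvd hX0 hdvd)
  rw [sum_range_C_coeff_mul_X_pow_succ]
  convert hmem using 1
  simp only [map_mul, map_pow, map_sub, map_add, map_one, Polynomial.aeval_X]
  ring

/-- With `u = 1 + a₁x + a₂x² + ⋯ ∈ k⟦x⟧` a square root of `1 + x` (char k ≠ 2) and, for
`N ≥ 2`, `b_{1,N} = x + a₁x² + ⋯ + a_{N−1}x^N + y`, `b_{2,N} = x + a₁x² + ⋯ + a_{N−1}x^N − y`,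
the element `δ_N = b_{1,N}·b_{2,N} − (x² + x³ − y²)` lies in `(x,y)^{N+1} ⊆ k[x,y]`. -/
theorem perturbation_in_power_of_max_ideal (k : Type*) [Field k] (h2 : ringChar k ≠ 2)
    (u : PowerSeries k) (hu0 : PowerSeries.constantCoeff u = 1)
    (hu : u ^ 2 = 1 + PowerSeries.X) (N : ℕ) (hN : 2 ≤ N) :
    ((∑ i ∈ Finset.range N, C (PowerSeries.coeff i u) * (X 0) ^ (i + 1)) + X 1) *
      ((∑ i ∈ Finset.range N, C (PowerSeries.coeff i u) * (X 0) ^ (i + 1)) - X 1) -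
      ((X 0) ^ 2 + (X 0) ^ 3 - (X 1) ^ 2)
      ∈ (Ideal.span {X 0, X 1} : Ideal (MvPolynomial (Fin 2) k)) ^ (N + 1) :=
  perturbation_in_power_of_max_ideal_general k u hu N
end

section
/- Let R = k⟦x,y⟧ over a field k, and let I = (xy). Then the element x + y is a non-zerodivisor on R/I, the ideal I + (x + y) = (x + y, x^2) is an irreducible ideal of R, but I itself is not a primary ideal. -/
open MvPowerSeries

/-!
Since `x` and `y` are distinct prime elements of the domain `k⟦x,y⟧`, the relation
`(x + y) r = x y f` forces first `x ∣ r` and then, after cancelling `x`, `y ∣ r / x`; so `x + y` is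
a non-zerodivisor modulo `(xy)`. The ideal `(xy)` is not primary because `xy ∈ (xy)` while neither
`x` nor any power of `y` is divisible by `xy`.

For irreducibility of `Q = (x + y, x²)`, note that `m = Q + (x)` and `x m ⊆ Q`, where
`m = (x, y)` is the maximal ideal. Hence modulo `Q` every non-unit is a scalar multiple of `x`,
so every ideal strictly containing `Q` contains `x`; as `x ∉ Q`, `Q` is not the intersection of
two strictly larger ideals.
-/

theorem infIrred_of_forall_lt_imp_le {α : Type*} [Lattice α] {a c : α} (hca : ¬c ≤ a)
    (h : ∀ b, a < b → c ≤ b) : InfIrred a := by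
  refine ⟨fun hmax => hca (le_sup_right.trans (hmax le_sup_left)), fun b d hbd => ?_⟩
  by_contra! hne
  have hab : a < b := lt_of_le_of_ne (hbd ▸ inf_le_left) hne.1.symm
  have had : a < d := lt_of_le_of_ne (hbd ▸ inf_le_right) hne.2.symm
  exact hca (hbd ▸ le_inf (h b hab) (h d had))

theorem Ideal.span_mul_sup_span_add {R : Type*} [CommRing R] (a b : R) :
    span {a * b} ⊔ span {a + b} = span {a + b, a ^ 2} := by
  apply le_antisymm
  · refine sup_le ?_ ?_ <;> rw [span_singleton_le_iff_mem, mem_span_pair]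
    · exact ⟨a, -1, by ring⟩
    · exact ⟨1, 0, by ring⟩
  · rw [span_le]
    rintro _ (rfl | rfl)
    · exact Submodule.mem_sup_right (mem_span_singleton_self _)
    · exact Submodule.mem_sup.2 ⟨-(a * b), neg_mem (mem_span_singleton_self _), a * (a + b),
        mul_mem_left _ _ (mem_span_singleton_self _), by ring⟩

namespace IsLocalRing

open Ideal

variable {R : Type*} [CommRing R] [IsLocalRing R] {Q : Ideal R} {x : R}

theorem mem_of_lt_of_maximalIdeal_le (hQx : maximalIdeal R ≤ Q ⊔ span {x})
    (hxQ : maximalIdeal R ≤ Q.colon {x}) {L : Ideal R} (hQL : Q < L) : x ∈ L := by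
  obtain ⟨f, hfL, hfQ⟩ := SetLike.exists_of_lt hQL
  by_cases hf : f ∈ maximalIdeal R
  · obtain ⟨q, hq, _, hrx, rfl⟩ := Submodule.mem_sup.1 (hQx hf)
    obtain ⟨r, rfl⟩ := mem_span_singleton'.1 hrx
    have hr : IsUnit r := by
      by_contra hr
      exact hfQ (Q.add_mem hq (Submodule.mem_colon_singleton.1 (hxQ hr)))
    have hrx : r * x ∈ L := by simpa using L.sub_mem hfL (hQL.le hq)
    exact (L.unit_mul_mem_iff_mem hr).1 hrx
  · rw [L.eq_top_of_isUnit_mem hfL (notMem_maximalIdeal.1 hf)]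
    trivial

theorem infIrred_of_maximalIdeal_le (hx : x ∉ Q) (hQx : maximalIdeal R ≤ Q ⊔ span {x})
    (hxQ : maximalIdeal R ≤ Q.colon {x}) : InfIrred Q :=
  infIrred_of_forall_lt_imp_le (by rwa [span_singleton_le_iff_mem]) fun _ hQL =>
    (span_singleton_le_iff_mem _).2 (mem_of_lt_of_maximalIdeal_le hQx hxQ hQL)

end IsLocalRing

namespace MvPowerSeries

variable {σ R : Type*}

theorem X_ne_zero [Semiring R] [Nontrivial R] (s : σ) : (X s : MvPowerSeries σ R) ≠ 0 := by
  intro h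
  simpa [X_def] using congrArg (coeff (Finsupp.single s 1)) h

theorem X_dvd_of_dvd_X_mul [CommSemiring R] {s t : σ} (hst : s ≠ t) {φ : MvPowerSeries σ R}
    (h : X s ∣ X t * φ) : X s ∣ φ := by
  classical
  rw [X_dvd_iff] at h ⊢
  intro m hm
  have := h (Finsupp.single t 1 + m) (by simp [hm, hst])
  rwa [X_def, coeff_add_monomial_mul, one_mul] at this

theorem X_not_dvd_X_pow [Semiring R] [Nontrivial R] {s t : σ} (hst : s ≠ t) (n : ℕ) :
    ¬X s ∣ (X t : MvPowerSeries σ R) ^ n := by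
  rw [X_dvd_iff]
  intro h
  have := h (Finsupp.single t n) (by simp [hst])
  rw [X_pow_eq, coeff_monomial_same] at this
  exact one_ne_zero this

theorem mem_span_X_mul_X_of_X_add_X_mul_mem [CommRing R] [IsDomain R] {s t : σ} (hst : s ≠ t)
    {r : MvPowerSeries σ R} (h : (X s + X t) * r ∈ Ideal.span {X s * X t}) :
    r ∈ Ideal.span {X s * X t} := by
  obtain ⟨f, hf⟩ := Ideal.mem_span_singleton.1 h
  obtain ⟨r, rfl⟩ : X s ∣ r :=
    X_dvd_of_dvd_X_mul hst ⟨X t * f - r, by linear_combination hf⟩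
  have hf' : (X s + X t) * r = X t * f :=
    mul_left_cancel₀ (X_ne_zero s) (by linear_combination hf)
  obtain ⟨r, rfl⟩ : X t ∣ r :=
    X_dvd_of_dvd_X_mul hst.symm ⟨f - r, by linear_combination hf'⟩
  exact Ideal.mem_span_singleton.2 ⟨r, by ring⟩

theorem not_isPrimary_span_X_mul_X [CommRing R] [Nontrivial R] {s t : σ} (hst : s ≠ t) :
    ¬(Ideal.span {X s * X t} : Ideal (MvPowerSeries σ R)).IsPrimary := by
  intro h
  rcases (Ideal.isPrimary_iff.1 h).2 (Ideal.mem_span_singleton_self _) with hs | ⟨n, hn⟩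
  · refine X_not_dvd_X_pow (R := R) hst.symm 1 ?_
    rw [pow_one]
    exact dvd_of_mul_left_dvd (Ideal.mem_span_singleton.1 hs)
  · exact X_not_dvd_X_pow hst n (dvd_of_mul_right_dvd (Ideal.mem_span_singleton.1 hn))

theorem sub_C_constantCoeff_mem_span_range_X [CommRing R] [Finite σ] (f : MvPowerSeries σ R) :
    f - C (constantCoeff f) ∈ Ideal.span (Set.range X) := by
  classical
  have := Fintype.ofFinite σ
  -- `part S` is `f` with the variables of `S` set to `0`; `part S - part (insert s S)` is
  -- divisible by `X s`, and `part univ` is the constant term.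
  let part (S : Finset σ) : MvPowerSeries σ R := fun m =>
    if ∀ s ∈ S, m s = 0 then coeff m f else 0
  have coeff_part (S : Finset σ) (m : σ →₀ ℕ) :
      coeff m (part S) = if ∀ s ∈ S, m s = 0 then coeff m f else 0 := rfl
  have hpart (S : Finset σ) : f - part S ∈ Ideal.span (X '' ↑S) := by
    induction S using Finset.induction_on with
    | empty =>
      rw [show part ∅ = f by ext m; simp [coeff_part], sub_self]
      exact zero_mem _
    | insert s S hs ih =>
      have hstep : X s ∣ part S - part (insert s S) := by
        rw [X_dvd_iff]
        intro m hm
        simp [coeff_part, hm]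
      rw [← sub_add_sub_cancel f (part S)]
      exact add_mem (Ideal.span_mono (by simp [Set.image_insert_eq]) ih)
        (Ideal.span_mono (by simp [Set.image_insert_eq]) (Ideal.mem_span_singleton.2 hstep))
  have huniv : part Finset.univ = C (constantCoeff f) := by
    ext m
    have hm : (∀ s, m s = 0) ↔ m = 0 := ⟨fun h => Finsupp.ext h, fun h => by simp [h]⟩
    simp only [coeff_part, coeff_C, Finset.mem_univ, forall_const, hm]
    split_ifs with h
    · rw [h, coeff_zero_eq_constantCoeff_apply]
    · rfl
  simpa [huniv] using hpart Finset.univ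

theorem maximalIdeal_le_span_range_X {k : Type*} [Field k] [Finite σ] :
    IsLocalRing.maximalIdeal (MvPowerSeries σ k) ≤ Ideal.span (Set.range X) := by
  intro f hf
  have hf0 : constantCoeff f = 0 := by
    simpa [isUnit_iff_constantCoeff] using (IsLocalRing.mem_maximalIdeal f).1 hf
  simpa [hf0] using sub_C_constantCoeff_mem_span_range_X f

end MvPowerSeries

section TwoVariables

variable {k : Type*} [Field k]

theorem X_zero_notMem_span_X_zero_add_X_one_X_zero_sq :
    (X 0 : MvPowerSeries (Fin 2) k) ∉ Ideal.span {X 0 + X 1, X 0 ^ 2} := by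
  intro h
  obtain ⟨u, v, huv⟩ := Ideal.mem_span_pair.1 h
  rw [X_pow_eq] at huv
  have hx : constantCoeff u = 1 := by
    simpa [X_def, mul_add, coeff_mul_monomial, Finsupp.single_le_iff, coeff_monomial,
      Finsupp.single_eq_single_iff] using congrArg (coeff (Finsupp.single 0 1)) huv
  have hy : constantCoeff u = 0 := by
    simpa [X_def, mul_add, coeff_mul_monomial, Finsupp.single_le_iff, coeff_monomial,
      Finsupp.single_eq_single_iff] using congrArg (coeff (Finsupp.single 1 1)) huv
  exact one_ne_zero (hx.symm.trans hy)

theorem infIrred_span_X_zero_add_X_one_X_zero_sq :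
    InfIrred (Ideal.span {X 0 + X 1, X 0 ^ 2} : Ideal (MvPowerSeries (Fin 2) k)) := by
  refine IsLocalRing.infIrred_of_maximalIdeal_le X_zero_notMem_span_X_zero_add_X_one_X_zero_sq
    (maximalIdeal_le_span_range_X.trans (Ideal.span_le.2 ?_))
    (maximalIdeal_le_span_range_X.trans (Ideal.span_le.2 ?_)) <;>
  rintro _ ⟨i, rfl⟩ <;> fin_cases i
  · exact Submodule.mem_sup_right (Ideal.mem_span_singleton_self _)
  · exact Submodule.mem_sup.2 ⟨X 0 + X 1, Ideal.subset_span (by simp), -X 0,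
      neg_mem (Ideal.mem_span_singleton_self _), by simp⟩
  · simpa [pow_two] using Ideal.subset_span (by simp)
  · simpa [Ideal.mem_span_pair] using ⟨X 0, -1, by ring⟩

end TwoVariables

/-- In `R = k⟦x,y⟧` with `I = (xy)`: the element `x + y` is a non-zerodivisor on `R/I`,
the ideal `I + (x + y) = (x + y, x²)` is an irreducible ideal of `R`, but `I` itself is
not primary. -/
theorem deformation_of_irreducible_ideal_fails (k : Type*) [Field k] :
    (∀ r : MvPowerSeries (Fin 2) k,
        (X 0 + X 1) * r ∈ (Ideal.span {X 0 * X 1} : Ideal (MvPowerSeries (Fin 2) k)) →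
        r ∈ (Ideal.span {X 0 * X 1} : Ideal (MvPowerSeries (Fin 2) k))) ∧
    (Ideal.span {X 0 * X 1} ⊔ Ideal.span {X 0 + X 1}
        = (Ideal.span {X 0 + X 1, X 0 ^ 2} : Ideal (MvPowerSeries (Fin 2) k))) ∧
    (∀ J K : Ideal (MvPowerSeries (Fin 2) k),
        J ⊓ K = Ideal.span {X 0 * X 1} ⊔ Ideal.span {X 0 + X 1} →
        J = Ideal.span {X 0 * X 1} ⊔ Ideal.span {X 0 + X 1} ∨
        K = Ideal.span {X 0 * X 1} ⊔ Ideal.span {X 0 + X 1}) ∧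
    ¬ (Ideal.span {X 0 * X 1} : Ideal (MvPowerSeries (Fin 2) k)).IsPrimary := by
  refine ⟨fun _ => mem_span_X_mul_X_of_X_add_X_mul_mem (by decide),
    Ideal.span_mul_sup_span_add _ _, ?_, not_isPrimary_span_X_mul_X (by decide)⟩
  rw [Ideal.span_mul_sup_span_add]
  exact fun J K hJK => infIrred_span_X_zero_add_X_one_X_zero_sq.2 hJK
end

section
/- Let (R, m) be a noetherian local ring and let a ∈ m be a non-zerodivisor. If R/(a) is reduced, then R is reduced. -/
/-! Every nilpotent `x` dies in the reduced ring `R/(a)`, so `x = a * y`; as `a` is a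
non-zerodivisor, `y` is nilpotent as well. Hence the nilradical `N` satisfies `N ⊆ aN`,
and Nakayama's lemma for the finitely generated ideal `N` gives `N = 0`. -/

open nonZeroDivisors

theorem isNilpotent_of_isNilpotent_mul_of_mem_nonZeroDivisors {R : Type*} [CommMonoidWithZero R]
    {a y : R} (ha : a ∈ R⁰) (hay : IsNilpotent (a * y)) : IsNilpotent y := by
  obtain ⟨n, hn⟩ := hay
  refine ⟨n, (pow_mem ha n).2 _ ?_⟩
  rw [mul_comm, ← mul_pow, hn]

theorem nilradical_le_span_singleton_smul_nilradical {R : Type*} [CommRing R] {a : R}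
    (hreg : a ∈ R⁰) (hred : IsReduced (R ⧸ Ideal.span {a})) :
    nilradical R ≤ Ideal.span {a} • nilradical R := by
  intro x hx
  have hx_mem : x ∈ Ideal.span {a} :=
    Ideal.Quotient.eq_zero_iff_mem.mp (IsNilpotent.map hx (Ideal.Quotient.mk _)).eq_zero
  obtain ⟨y, rfl⟩ := Ideal.mem_span_singleton.mp hx_mem
  exact Submodule.smul_mem_smul (Ideal.mem_span_singleton_self a)
    (isNilpotent_of_isNilpotent_mul_of_mem_nonZeroDivisors hreg hx)

theorem isReduced_of_quotient_isReduced_of_mem_jacobson {R : Type*} [CommRing R]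
    [IsNoetherianRing R] {a : R} (ha : a ∈ (⊥ : Ideal R).jacobson) (hreg : a ∈ R⁰)
    (hred : IsReduced (R ⧸ Ideal.span {a})) : IsReduced R :=
  nilradical_eq_bot_iff.mp <|
    Submodule.eq_bot_of_le_smul_of_le_jacobson_bot _ _ (IsNoetherian.noetherian _)
      (nilradical_le_span_singleton_smul_nilradical hreg hred)
      ((Ideal.span_singleton_le_iff_mem _).mpr ha)

/-- If `(R, m)` is a noetherian local ring and `a ∈ m` is a non-zerodivisor such that
`R/(a)` is reduced, then `R` is reduced. -/
theorem isReduced_of_quotient_isReduced {R : Type*} [CommRing R] [IsNoetherianRing R]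
    [IsLocalRing R] (a : R) (ha : a ∈ IsLocalRing.maximalIdeal R)
    (hreg : a ∈ nonZeroDivisors R)
    (hred : IsReduced (R ⧸ Ideal.span {a})) : IsReduced R := by
  rw [← IsLocalRing.jacobson_eq_maximalIdeal ⊥ bot_ne_top] at ha
  exact isReduced_of_quotient_isReduced_of_mem_jacobson ha hreg hred
end

section
/- Let (R, m) be a noetherian local ring and let a ∈ m be a non-zerodivisor of R. Then there exists an integer N ≥ 1 such that for every δ ∈ m^N, the element a + δ is also a non-zerodivisor of R. -/
/-!
By Artin–Rees applied to the ideal `(a)`, there is `k` with `I ^ (n + k) ∩ (a) ⊆ a • I ^ n`,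
so, `a` being regular, `a * x ∈ I ^ (n + k)` forces `x ∈ I ^ n`. If `(a + δ) * x = 0` with
`δ ∈ I ^ (k + 1)`, then `a * x = -δ * x`, and induction puts `x` in every power of `I`;
Krull's intersection theorem gives `x = 0`.
-/

open nonZeroDivisors

namespace Ideal

variable {R : Type*} [CommRing R] {I : Ideal R} {a : R}

theorem exists_mem_pow_of_mul_mem_pow_add [IsNoetherianRing R] (I : Ideal R) (ha : a ∈ R⁰) :
    ∃ k : ℕ, ∀ (n : ℕ) (x : R), a * x ∈ I ^ (n + k) → x ∈ I ^ n := by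
  obtain ⟨k, hk⟩ := I.exists_pow_inf_eq_pow_smul (M := R) (span {a})
  refine ⟨k, fun n x hx ↦ ?_⟩
  have hax : a * x ∈ I ^ (n + k) • ⊤ ⊓ span {a} :=
    ⟨by simpa using hx, mem_span_singleton'.mpr ⟨x, mul_comm x a⟩⟩
  rw [hk _ (Nat.le_add_left k n), Nat.add_sub_cancel] at hax
  obtain ⟨y, hy, hya⟩ := mem_mul_span_singleton.mp
    (Submodule.smul_mono le_rfl inf_le_right hax : a * x ∈ I ^ n * span {a})
  have hxy : x = y := (mul_cancel_left_mem_nonZeroDivisors ha).mp (by rw [← hya, mul_comm])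
  exact hxy ▸ hy

theorem mem_iInf_pow_of_mul_add_eq_zero {k : ℕ}
    (hk : ∀ (n : ℕ) (x : R), a * x ∈ I ^ (n + k) → x ∈ I ^ n) {δ x : R}
    (hδ : δ ∈ I ^ (k + 1)) (hx : (a + δ) * x = 0) : x ∈ ⨅ n : ℕ, I ^ n := by
  refine Submodule.mem_iInf _ |>.mpr fun n ↦ ?_
  induction n with
  | zero => simp
  | succ n ih =>
    have hax : a * x = -(δ * x) := by linear_combination hx
    apply hk
    rw [hax, show n + 1 + k = (k + 1) + n by omega, pow_add]
    exact neg_mem (mul_mem_mul hδ ih)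

theorem exists_add_mem_nonZeroDivisors_of_iInf_pow_eq_bot [IsNoetherianRing R]
    (hI : ⨅ n : ℕ, I ^ n = ⊥) (ha : a ∈ R⁰) :
    ∃ N : ℕ, 1 ≤ N ∧ ∀ δ ∈ I ^ N, a + δ ∈ R⁰ := by
  obtain ⟨k, hk⟩ := I.exists_mem_pow_of_mul_mem_pow_add ha
  refine ⟨k + 1, Nat.le_add_left 1 k, fun δ hδ ↦ ?_⟩
  refine mem_nonZeroDivisors_iff_left.mpr fun x hx ↦ ?_
  simpa [hI] using mem_iInf_pow_of_mul_add_eq_zero hk hδ hx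

end Ideal

theorem nonZeroDivisor_stable_under_perturbation_general {R : Type*} [CommRing R]
    [IsNoetherianRing R] [IsLocalRing R] (a : R)
    (hreg : a ∈ nonZeroDivisors R) :
    ∃ N : ℕ, 1 ≤ N ∧
      ∀ δ ∈ (IsLocalRing.maximalIdeal R) ^ N, a + δ ∈ nonZeroDivisors R :=
  Ideal.exists_add_mem_nonZeroDivisors_of_iInf_pow_eq_bot
    (Ideal.iInf_pow_eq_bot_of_isLocalRing _ Ideal.IsPrime.ne_top') hreg

/-- Perturbation of regular elements: if `(R, m)` is a noetherian local ring and `a ∈ m`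
is a non-zerodivisor, then there is `N ≥ 1` such that `a + δ` is a non-zerodivisor for
every `δ ∈ m^N`. -/
theorem nonZeroDivisor_stable_under_perturbation {R : Type*} [CommRing R]
    [IsNoetherianRing R] [IsLocalRing R] (a : R)
    (ha : a ∈ IsLocalRing.maximalIdeal R) (hreg : a ∈ nonZeroDivisors R) :
    ∃ N : ℕ, 1 ≤ N ∧
      ∀ δ ∈ (IsLocalRing.maximalIdeal R) ^ N, a + δ ∈ nonZeroDivisors R :=
  nonZeroDivisor_stable_under_perturbation_general a hreg
end

section
/- Let R be a noetherian integral domain with fraction field Q(R), let n ≥ 1, and let F = x₁t₁ + ⋯ + xₙtₙ ∈ R[t₁,…,tₙ] where x₁,…,xₙ ∈ R are not all zero. If the ideal (F) of R[t₁,…,tₙ] is prime, then grade((x₁,…,xₙ), R) ≥ 2, i.e., the ideal (x₁,…,xₙ) of R contains a regular sequence of length 2. -/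
open MvPolynomial

/-!
Take `r = xⱼ ≠ 0`. If `xᵢ t ∈ (r)` for all `i`, say `xᵢ t = r yᵢ`, then
`t F = r (∑ yᵢ tᵢ)` lies in the prime `(F)`; the constant `r` does not, so `F ∣ ∑ yᵢ tᵢ`, and
cancelling `F` shows `t ∈ (r)`. Hence `((r) : (x)) = (r)`, i.e. no nonzero element of `R/(r)` is
killed by `(x)`. Since `R/(r)` has finitely many associated primes, prime avoidance then gives
an `s ∈ (x)` outside all of them, which is regular on `R/(r)`.
-/

section AssociatedPrimes

variable {R M : Type*} [CommRing R] [IsNoetherianRing R] [AddCommGroup M] [Module R M]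
  [Module.Finite R M]

theorem exists_mem_isSMulRegular_of_forall_smul_eq_zero {I : Ideal R}
    (h : ∀ m : M, (∀ a ∈ I, a • m = 0) → m = 0) : ∃ a ∈ I, IsSMulRegular M a := by
  by_contra! hI
  obtain ⟨P, hP, hIP⟩ := (Ideal.subset_union_prime_finite (associatedPrimes.finite R M)
    (f := id) (I := I) 0 0 fun P hP _ _ ↦ hP.isPrime).mp <| by
      simp only [id, biUnion_associatedPrimes_eq_compl_regular]
      exact hI
  obtain ⟨hPrime, m, rfl⟩ := isAssociatedPrime_iff.mp hP
  have hm : m = 0 := h m fun a ha ↦ by simpa using hIP ha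
  exact hPrime.ne_top (by simp [hm])

theorem Ideal.exists_mem_forall_mul_mem_imp_mem {I J : Ideal R}
    (h : ∀ t, (∀ a ∈ I, a * t ∈ J) → t ∈ J) : ∃ s ∈ I, ∀ t, s * t ∈ J → t ∈ J := by
  obtain ⟨s, hs, hreg⟩ := exists_mem_isSMulRegular_of_forall_smul_eq_zero (M := R ⧸ J) (I := I)
    fun m hm ↦ by
      induction m using Submodule.Quotient.induction_on with
      | H t =>
        refine (Submodule.Quotient.mk_eq_zero J).mpr (h t fun a ha ↦ ?_)
        have := hm a ha
        rwa [← Submodule.Quotient.mk_smul, Submodule.Quotient.mk_eq_zero, smul_eq_mul] at this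
  exact ⟨s, hs, (isSMulRegular_quotient_iff_mem_of_smul_mem J s).mp hreg⟩

end AssociatedPrimes

section LinearForm

variable {σ R : Type*} [Fintype σ]

noncomputable def linearForm [CommSemiring R] (x : σ → R) : MvPolynomial σ R :=
  ∑ i, C (x i) * X i

section CommSemiring

variable [CommSemiring R]

@[simp]
theorem constantCoeff_linearForm (x : σ → R) : constantCoeff (linearForm x) = 0 := by
  simp [linearForm]

theorem coeff_single_linearForm (x : σ → R) (j : σ) :
    coeff (Finsupp.single j 1) (linearForm x) = x j := by
  classical
  simp [linearForm, coeff_sum, coeff_X, Finsupp.single_left_inj one_ne_zero]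

theorem linearForm_ne_zero {x : σ → R} (hx : x ≠ 0) : linearForm x ≠ 0 := by
  obtain ⟨j, hj⟩ := Function.ne_iff.mp hx
  intro h
  exact hj (by simpa [h] using (coeff_single_linearForm x j).symm)

theorem C_mul_linearForm (a : R) (x : σ → R) : C a * linearForm x = linearForm (a • x) := by
  simp [linearForm, Finset.mul_sum, mul_assoc]

theorem C_notMem_span_linearForm {r : R} (hr : r ≠ 0) (x : σ → R) :
    C r ∉ Ideal.span {linearForm x} := by
  rw [Ideal.mem_span_singleton']
  rintro ⟨d, hd⟩
  exact hr (by simpa using (congrArg constantCoeff hd).symm)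

end CommSemiring

theorem mem_span_singleton_of_forall_mul_mem_of_isPrime_linearForm [CommRing R] [IsDomain R]
    {x : σ → R} (hx : x ≠ 0) (hF : (Ideal.span {linearForm x}).IsPrime) {r t : R} (hr : r ≠ 0)
    (h : ∀ i, x i * t ∈ Ideal.span {r}) : t ∈ Ideal.span {r} := by
  choose y hy using fun i ↦ Ideal.mem_span_singleton.mp (h i)
  have hty : C t * linearForm x = C r * linearForm y := by
    rw [C_mul_linearForm, C_mul_linearForm]
    congr 1
    ext i
    simp [mul_comm t, hy]
  have hmem : C r * linearForm y ∈ Ideal.span {linearForm x} :=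
    hty ▸ Ideal.mul_mem_left _ _ (Ideal.mem_span_singleton_self _)
  obtain ⟨d, hd⟩ : linearForm x ∣ linearForm y := Ideal.mem_span_singleton.mp
    ((hF.mem_or_mem hmem).resolve_left (C_notMem_span_linearForm hr x))
  have htd : C t = C r * d :=
    mul_left_cancel₀ (linearForm_ne_zero hx) (by rw [mul_comm _ (C t), hty, hd, mul_left_comm])
  exact Ideal.mem_span_singleton.mpr ⟨constantCoeff d, by simpa using congrArg constantCoeff htd⟩

end LinearForm

theorem grade_ge_two_of_linear_hypersurface_prime_general {R : Type*} [CommRing R] [IsDomain R]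
    [IsNoetherianRing R] (n : ℕ) (x : Fin n → R) (hx : x ≠ 0)
    (hF : (Ideal.span {∑ i, C (x i) * X i} : Ideal (MvPolynomial (Fin n) R)).IsPrime) :
    ∃ r s : R, r ∈ Ideal.span (Set.range x) ∧ s ∈ Ideal.span (Set.range x) ∧
      r ∈ nonZeroDivisors R ∧
      ∀ t : R, s * t ∈ Ideal.span {r} → t ∈ Ideal.span {r} := by
  obtain ⟨j, hj⟩ := Function.ne_iff.mp hx
  obtain ⟨s, hs, hreg⟩ := Ideal.exists_mem_forall_mul_mem_imp_mem
    (I := Ideal.span (Set.range x)) (J := Ideal.span {x j}) fun t ht ↦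
      mem_span_singleton_of_forall_mul_mem_of_isPrime_linearForm hx hF hj fun i ↦
        ht _ (Ideal.subset_span ⟨i, rfl⟩)
  exact ⟨x j, s, Ideal.subset_span ⟨j, rfl⟩, hs, mem_nonZeroDivisors_of_ne_zero hj, hreg⟩

/-- Let `R` be a noetherian domain, `n ≥ 1`, and `F = x₁t₁ + ⋯ + xₙtₙ ∈ R[t₁,…,tₙ]`
with `x₁,…,xₙ ∈ R` not all zero. If `(F)` is a prime ideal of `R[t₁,…,tₙ]`, then
`grade((x₁,…,xₙ), R) ≥ 2`: the ideal `(x₁,…,xₙ)` contains a regular sequence of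
length 2. -/
theorem grade_ge_two_of_linear_hypersurface_prime {R : Type*} [CommRing R] [IsDomain R]
    [IsNoetherianRing R] (n : ℕ) (hn : 1 ≤ n) (x : Fin n → R) (hx : x ≠ 0)
    (hF : (Ideal.span {∑ i, C (x i) * X i} : Ideal (MvPolynomial (Fin n) R)).IsPrime) :
    ∃ r s : R, r ∈ Ideal.span (Set.range x) ∧ s ∈ Ideal.span (Set.range x) ∧
      r ∈ nonZeroDivisors R ∧
      ∀ t : R, s * t ∈ Ideal.span {r} → t ∈ Ideal.span {r} :=
  grade_ge_two_of_linear_hypersurface_prime_general n x hx hF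
end

section
/- Let k be a field of characteristic 0 and R = k[x,y] localized at the maximal ideal (x,y). Then R/(x² + x³ − y²) is an integral domain, but for every N ≥ 1 there exists δ ∈ (x,y)^N · R such that R/(x² + x³ − y² + δ) is not an integral domain. -/
/-! The cubic `y² - x² - x³` is a monic quadratic in `y` over `k[x]`; a factorization would give
a root `c` with `c² = x² + x³`, impossible for degree reasons. So it is prime in the UFD
`k[x, y]`, and a prime contained in `(x, y)` stays prime in the localization.

For the perturbation, Newton's iteration (with `2` invertible) gives a polynomial `s` with
`s² ≡ 1 + x` modulo `x^(N+1)`. Then `(xs - y)(xs + y) = x²s² - y²` differs from the cubic by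
`x²(s² - 1 - x)`, a multiple of `x^N`, and both factors lie in `(x, y)`, so they are non-units of
the local ring. -/

namespace Polynomial

variable {R : Type*} [CommRing R]

theorem exists_sq_sub_dvd_X_pow [Invertible (2 : R)] {f : R[X]} (hf : f.coeff 0 = 1) (N : ℕ) :
    ∃ s : R[X], s.coeff 0 = 1 ∧ X ^ (N + 1) ∣ s ^ 2 - f := by
  induction N with
  | zero => exact ⟨1, coeff_one_zero, by simp [X_dvd_iff, hf]⟩
  | succ N ih =>
    obtain ⟨s, hs0, t, ht⟩ := ih
    -- Newton step: the correction `c X^(N+1)` with `2c = t(0)` kills the next coefficient.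
    set c := ⅟2 * t.coeff 0
    refine ⟨s - C c * X ^ (N + 1), by simp [hs0], ?_⟩
    have hsq : (s - C c * X ^ (N + 1)) ^ 2 - f
        = X ^ (N + 1) * (t - 2 * C c * s) + C c ^ 2 * X ^ (2 * N + 2) := by
      linear_combination ht
    have hcorr : X ∣ t - 2 * C c * s := X_dvd_iff.mpr (by simp [c, hs0])
    have hsq_dvd : X ^ (N + 1 + 1) ∣ (X : R[X]) ^ (2 * N + 2) := pow_dvd_pow X (by omega)
    rw [hsq, pow_succ]
    exact dvd_add (mul_dvd_mul_left _ hcorr) (dvd_mul_of_dvd_right hsq_dvd _)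

variable [IsDomain R]

theorem irreducible_X_sq_sub_C {c : R} (hc : ∀ r : R, r ^ 2 ≠ c) :
    Irreducible (X ^ 2 - C c) := by
  have hmonic : (X ^ 2 - C c).Monic := monic_X_pow_sub_C c two_ne_zero
  have hdeg : (X ^ 2 - C c).natDegree = 2 := natDegree_X_pow_sub_C
  rw [hmonic.irreducible_iff_roots_eq_zero_of_degree_le_three hdeg.ge (by omega),
    Multiset.eq_zero_iff_forall_notMem]
  intro r hr
  rw [mem_roots hmonic.ne_zero, IsRoot, eval_sub, eval_pow, eval_X, eval_C, sub_eq_zero] at hr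
  exact hc r hr

theorem sq_ne_X_sq_add_X_pow_three (p : R[X]) : p ^ 2 ≠ X ^ 2 + X ^ 3 := by
  intro h
  have h3 : (X ^ 2 + X ^ 3 : R[X]).natDegree = 3 := by compute_degree!
  have := congrArg natDegree h
  rw [natDegree_pow, h3] at this
  omega

end Polynomial

open MvPolynomial

theorem MvPolynomial.prime_X_zero_sq_add_X_zero_pow_three_sub_X_one_sq {R : Type*} [CommRing R]
    [IsDomain R] [UniqueFactorizationMonoid R] :
    Prime (X 0 ^ 2 + X 0 ^ 3 - X 1 ^ 2 : MvPolynomial (Fin 2) R) := by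
  let e := (renameEquiv R (Equiv.swap (0 : Fin 2) 1)).trans (finSuccEquiv R 1)
  set z : MvPolynomial (Fin 1) R := X 0
  have h0 : e (X 0) = Polynomial.C z := by
    simpa [e, z] using finSuccEquiv_X_succ (R := R) (n := 1) (j := 0)
  have h1 : e (X 1) = Polynomial.X := by simpa [e] using finSuccEquiv_X_zero (R := R) (n := 1)
  have he : e (X 0 ^ 2 + X 0 ^ 3 - X 1 ^ 2)
      = -(Polynomial.X ^ 2 - Polynomial.C (z ^ 2 + z ^ 3)) := by
    rw [map_sub, map_add, map_pow, map_pow, map_pow, h0, h1, Polynomial.C_add, Polynomial.C_pow,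
      Polynomial.C_pow]
    ring
  have hz : ∀ r, r ^ 2 ≠ z ^ 2 + z ^ 3 := fun r h =>
    Polynomial.sq_ne_X_sq_add_X_pow_three (aeval (fun _ => Polynomial.X) r) (by
      simpa [z] using congrArg (aeval (R := R) fun _ => (Polynomial.X : Polynomial R)) h)
  rw [← MulEquiv.prime_iff e.toMulEquiv]
  change Prime (e _)
  rw [he]
  exact (UniqueFactorizationMonoid.irreducible_iff_prime.mp
    (Polynomial.irreducible_X_sq_sub_C hz)).neg

theorem not_isDomain_quotient_span_mul {R : Type*} [CommRing R] [IsDomain R] {u v : R}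
    (hu : u ≠ 0) (hv : v ≠ 0) (hu' : ¬IsUnit u) (hv' : ¬IsUnit v) :
    ¬IsDomain (R ⧸ Ideal.span {u * v}) := by
  rw [Ideal.Quotient.isDomain_iff_prime, Ideal.span_singleton_prime (mul_ne_zero hu hv)]
  intro h
  exact (h.irreducible.isUnit_or_isUnit rfl).elim hu' hv'

section Localization

variable {A : Type*} [CommRing A] (P : Ideal A) [P.IsPrime]

theorem isDomain_quotient_span_algebraMap_of_prime {p : A} (hp : Prime p) (hpP : p ∈ P) :
    IsDomain (Localization.AtPrime P ⧸ Ideal.span {algebraMap A (Localization.AtPrime P) p}) := by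
  have hdisj : Disjoint (P.primeCompl : Set A) (Ideal.span {p} : Set A) :=
    Set.disjoint_right.mpr fun x hx hxc => hxc ((Ideal.span_singleton_le_iff_mem P).mpr hpP hx)
  have := IsLocalization.isPrime_of_isPrime_disjoint P.primeCompl (Localization.AtPrime P) _
    ((Ideal.span_singleton_prime hp.ne_zero).mpr hp) hdisj
  rw [Ideal.map_span, Set.image_singleton] at this
  exact Ideal.Quotient.isDomain _

theorem not_isDomain_quotient_span_algebraMap_mul [IsDomain A] {u v : A} (hu : u ≠ 0)
    (hv : v ≠ 0) (huP : u ∈ P) (hvP : v ∈ P) :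
    ¬IsDomain
      (Localization.AtPrime P ⧸ Ideal.span {algebraMap A (Localization.AtPrime P) (u * v)}) := by
  have hinj := IsLocalization.injective (Localization.AtPrime P) P.primeCompl_le_nonZeroDivisors
  rw [map_mul]
  refine not_isDomain_quotient_span_mul ?_ ?_ ?_ ?_
  · exact (map_ne_zero_iff _ hinj).mpr hu
  · exact (map_ne_zero_iff _ hinj).mpr hv
  · exact fun h => (IsLocalization.AtPrime.isUnit_to_map_iff _ P u).mp h huP
  · exact fun h => (IsLocalization.AtPrime.isUnit_to_map_iff _ P v).mp h hvP

theorem algebraMap_mem_map_pow_of_dvd {x d : A} (hx : x ∈ P) (N : ℕ) (hd : x ^ N ∣ d) :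
    algebraMap A (Localization.AtPrime P) d ∈
      (P.map (algebraMap A (Localization.AtPrime P))) ^ N := by
  rw [← Ideal.map_pow]
  exact Ideal.mem_map_of_mem _ (Ideal.mem_of_dvd _ hd (Ideal.pow_mem_pow hx N))

end Localization

/-- Let `k` be a field of characteristic 0 and `R = k[x,y]_{(x,y)}`. Then
`R/(x² + x³ − y²)` is an integral domain, but for every `N ≥ 1` there exists
`δ ∈ (x,y)^N · R` such that `R/(x² + x³ − y² + δ)` is not an integral domain. -/
theorem domain_not_stable_under_perturbation (k : Type*) [Field k] [CharZero k]
    (P : Ideal (MvPolynomial (Fin 2) k)) [P.IsPrime]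
    (hP : P = Ideal.span {X 0, X 1}) :
    IsDomain (Localization.AtPrime P ⧸
      Ideal.span {algebraMap (MvPolynomial (Fin 2) k) (Localization.AtPrime P)
        ((X 0) ^ 2 + (X 0) ^ 3 - (X 1) ^ 2)}) ∧
    ∀ N : ℕ, 1 ≤ N →
      ∃ δ ∈ (Ideal.map (algebraMap (MvPolynomial (Fin 2) k) (Localization.AtPrime P)) P) ^ N,
        ¬ IsDomain (Localization.AtPrime P ⧸
          Ideal.span {algebraMap (MvPolynomial (Fin 2) k) (Localization.AtPrime P)
            ((X 0) ^ 2 + (X 0) ^ 3 - (X 1) ^ 2) + δ}) := by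
  have hX0 : (X 0 : MvPolynomial (Fin 2) k) ∈ P := hP ▸ Ideal.subset_span (by simp)
  have hX1 : (X 1 : MvPolynomial (Fin 2) k) ∈ P := hP ▸ Ideal.subset_span (by simp)
  refine ⟨isDomain_quotient_span_algebraMap_of_prime P
    prime_X_zero_sq_add_X_zero_pow_three_sub_X_one_sq ?_, fun N _ => ?_⟩
  · exact sub_mem (add_mem (P.pow_mem_of_mem hX0 2 two_pos) (P.pow_mem_of_mem hX0 3 three_pos))
      (P.pow_mem_of_mem hX1 2 two_pos)
  obtain ⟨s, -, hs⟩ :=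
    Polynomial.exists_sq_sub_dvd_X_pow (f := (1 + Polynomial.X : Polynomial k)) (by simp) N
  set S := Polynomial.aeval (X 0 : MvPolynomial (Fin 2) k) s
  have hS : X 0 ^ (N + 1) ∣ S ^ 2 - (1 + X 0) := by
    simpa using map_dvd (Polynomial.aeval (X 0 : MvPolynomial (Fin 2) k)) hs
  set u := X 0 * S - X 1
  set v := X 0 * S + X 1
  have hδ : X 0 ^ N ∣ u * v - (X 0 ^ 2 + X 0 ^ 3 - X 1 ^ 2) := by
    rw [show u * v - (X 0 ^ 2 + X 0 ^ 3 - X 1 ^ 2) = X 0 ^ 2 * (S ^ 2 - (1 + X 0)) by ring]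
    exact (pow_dvd_pow _ N.le_succ).trans (hS.mul_left _)
  refine ⟨_, algebraMap_mem_map_pow_of_dvd P hX0 N hδ, ?_⟩
  rw [← map_add, add_sub_cancel]
  refine not_isDomain_quotient_span_algebraMap_mul P ?_ ?_
    (sub_mem (P.mul_mem_right _ hX0) hX1) (add_mem (P.mul_mem_right _ hX0) hX1)
  · exact fun h => by simpa [u] using congrArg (eval ![0, 1]) h
  · exact fun h => by simpa [v] using congrArg (eval ![0, 1]) h
end
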